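/- arXiv:1903.07985 — 3 statements merged into one kernel-verified Lean document; each statement's English description precedes it below -/
import Mathlib

section
/- Every torsion-free abelian group admits a linear order making it a linearly ordered abelian group (Levi's theorem). -/
/-!
A torsion-free abelian group embeds into its divisible hull, a `ℚ`-vector space. Choosing a basis
indexed by a linearly ordered set identifies that space with the finitely supported functions
`ι →₀ ℚ`, which the lexicographic order makes a linearly ordered group; pulling this order back
along the injective embedding orders the original group.
-/

theorem AddMonoidHom.exists_linearOrder_isOrderedAddMonoid_of_injective {M N : Type*}
    [AddCommMonoid M] [AddCommMonoid N] [LinearOrder N] [IsOrderedAddMonoid N] {f : M →+ N}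
    (hf : Function.Injective f) : ∃ _ : LinearOrder M, IsOrderedAddMonoid M :=
  letI := LinearOrder.lift' f hf
  ⟨_, Function.Injective.isOrderedAddMonoid f (map_add f) .rfl⟩

theorem Module.Free.exists_linearOrder_isOrderedAddMonoid (K V : Type*) [Semiring K]
    [LinearOrder K] [IsOrderedCancelAddMonoid K] [AddCommMonoid V] [Module K V] [Module.Free K V] :
    ∃ _ : LinearOrder V, IsOrderedAddMonoid V := by
  let : LinearOrder (Module.Free.ChooseBasisIndex K V) := IsWellOrder.linearOrder WellOrderingRel
  exact AddMonoidHom.exists_linearOrder_isOrderedAddMonoid_of_injective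
    (f := ((Module.Free.chooseBasis K V).repr.trans (toLexLinearEquiv K _)).toAddMonoidHom)
    (LinearEquiv.injective _)

theorem AddCommGroup.exists_linearOrder_isOrderedAddMonoid (M : Type*) [AddCommGroup M]
    [IsAddTorsionFree M] : ∃ _ : LinearOrder M, IsOrderedAddMonoid M := by
  obtain ⟨_, _⟩ := Module.Free.exists_linearOrder_isOrderedAddMonoid ℚ (DivisibleHull M)
  exact AddMonoidHom.exists_linearOrder_isOrderedAddMonoid_of_injective
    (f := DivisibleHull.coeAddMonoidHom M) DivisibleHull.coe_injective

theorem CommGroup.exists_linearOrder_isOrderedMonoid (G : Type*) [CommGroup G]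
    [IsMulTorsionFree G] : ∃ _ : LinearOrder G, IsOrderedMonoid G := by
  obtain ⟨_, _⟩ := AddCommGroup.exists_linearOrder_isOrderedAddMonoid (Additive G)
  exact ⟨inferInstanceAs (LinearOrder (Multiplicative (Additive G))),
    inferInstanceAs (IsOrderedMonoid (Multiplicative (Additive G)))⟩

/-- Levi's theorem: every torsion-free abelian group admits a compatible linear order. -/
theorem levi_torsion_free_orderable (G : Type*) [CommGroup G]
    (htf : ∀ g : G, ∀ n : ℕ, 0 < n → g ^ n = 1 → g = 1) :
    ∃ le : G → G → Prop, IsLinearOrder G le ∧ ∀ a b c : G, le a b → le (a * c) (b * c) := by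
  have : IsMulTorsionFree G := .of_not_isOfFinOrder fun g hg hfin => by
    obtain ⟨n, hn, hgn⟩ := isOfFinOrder_iff_pow_eq_one.mp hfin
    exact hg (htf g n hn hgn)
  obtain ⟨_, _⟩ := CommGroup.exists_linearOrder_isOrderedMonoid G
  exact ⟨(· ≤ ·), inferInstance, fun a b c h => mul_le_mul_left h c⟩
end

section
/- A reciprocal n×n matrix M over a multiplicative group (i.e., M[j][i] = M[i][j]⁻¹ and M[i][i] = 1) is consistent (M[i][k]·M[k][j] = M[i][j] for all i,j,k) if and only if there exists a vector v with M[i][j] = v[i]·v[j]⁻¹ for all i,j. -/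
/-! Consistency alone forces `M i i = 1` and `M j i = (M i j)⁻¹`, so any column of a consistent
matrix generates it: `M i j = M i k * M k j = M i k * (M j k)⁻¹`. None of this needs
commutativity. -/

section

variable {ι G : Type*} [Group G] {M : ι → ι → G}

theorem diag_eq_one_of_consistent (h : ∀ i j k, M i k * M k j = M i j) (i : ι) : M i i = 1 :=
  mul_eq_left.mp (h i i i)

theorem inv_eq_of_consistent (h : ∀ i j k, M i k * M k j = M i j) (i j : ι) :
    (M i j)⁻¹ = M j i :=
  inv_eq_of_mul_eq_one_right (by rw [h, diag_eq_one_of_consistent h])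

theorem eq_mul_inv_column_of_consistent (h : ∀ i j k, M i k * M k j = M i j) (i j k : ι) :
    M i j = M i k * (M j k)⁻¹ := by
  rw [inv_eq_of_consistent h, h]

theorem exists_generator_of_consistent (h : ∀ i j k, M i k * M k j = M i j) :
    ∃ v : ι → G, ∀ i j, M i j = v i * (v j)⁻¹ := by
  rcases isEmpty_or_nonempty ι with _ | ⟨⟨k⟩⟩
  · exact ⟨1, isEmptyElim⟩
  · exact ⟨(M · k), fun i j => eq_mul_inv_column_of_consistent h i j k⟩

theorem consistent_of_generator {v : ι → G} (hv : ∀ i j, M i j = v i * (v j)⁻¹) :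
    ∀ i j k, M i k * M k j = M i j := by
  simp [hv, mul_assoc]

end

theorem consistent_iff_generated_general {G : Type*} [CommGroup G] {n : ℕ}
    (M : Fin n → Fin n → G) :
    (∀ i j k, M i k * M k j = M i j) ↔
      ∃ v : Fin n → G, ∀ i j, M i j = v i * (v j)⁻¹ :=
  ⟨exists_generator_of_consistent, fun ⟨_, hv⟩ => consistent_of_generator hv⟩

/-- A reciprocal matrix over an abelian group is consistent iff it is generated by a
vector of weights. -/
theorem consistent_iff_generated {G : Type*} [CommGroup G] {n : ℕ}
    (M : Fin n → Fin n → G)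
    (hrec : ∀ i j, M j i = (M i j)⁻¹) (hdiag : ∀ i, M i i = 1) :
    (∀ i j k, M i k * M k j = M i j) ↔
      ∃ v : Fin n → G, ∀ i j, M i j = v i * (v j)⁻¹ :=
  consistent_iff_generated_general M
end

section
/- For the matrix M₂ with rows [1, i, 1], [-i, 1, -i], [1, i, 1], every choice of row geometric means (v₀, v₁, v₂) with v₀³ = i, v₁³ = -1, v₂³ = i fails to reconstruct M₂ as a real-ratio matrix: for every such choice the ratio v₀/v₁ is not a positive real number. -/
namespace Complex

theorem ofReal_pow_ne_neg_I (r : ℝ) (n : ℕ) : (r : ℂ) ^ n ≠ -I := fun h => by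
  simpa [← ofReal_pow] using congrArg im h

end Complex

open Complex in
/-- No choice of row geometric means for `M₂` reconstructs it with a positive
real ratio `v₀/v₁`. -/
theorem M2_geometric_means_not_real :
    ∀ v₀ v₁ : ℂ, v₀ ^ 3 = I → v₁ ^ 3 = -1 →
      ¬ ∃ r : ℝ, 0 < r ∧ v₀ / v₁ = (r : ℂ) := by
  rintro v₀ v₁ h₀ h₁ ⟨r, -, hr⟩
  have ratio_cube : (v₀ / v₁) ^ 3 = -I := by rw [div_pow, h₀, h₁, div_neg, div_one]
  exact ofReal_pow_ne_neg_I r 3 (hr ▸ ratio_cube)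
end
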